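/- Let v ≥ 4 and δ ≥ 1 be integers. Let ψ = (ψ_1,…,ψ_{v−1}) and ψ′ = (ψ′_1,…,ψ′_{v−1}) be tuples of real numbers with 0 ≤ ψ_i ≤ 2δ and 0 ≤ ψ′_i ≤ 2δ for all i, such that S_1(ψ) = S_1(ψ′), S_2(ψ) = S_2(ψ′) and S_3(ψ) ≥ S_3(ψ′) + 1. Then for every real x ≥ (1/v)·( (2δ)^{v−1}·C(v−1, ⌊(v−1)/2⌋) + 1 ), one has ∏_{i=1}^{v−1}(vx + ψ′_i) < ∏_{i=1}^{v−1}(vx + ψ_i). -/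
import Mathlib


/-- The `j`-th elementary symmetric polynomial of the tuple `z`. -/
noncomputable def elemSymm {n : ℕ} (z : Fin n → ℝ) (j : ℕ) : ℝ :=
  ∑ J ∈ Finset.univ.powersetCard j, ∏ i ∈ J, z i

lemma prod_eq_sum_elemSymm {n : ℕ} (z : Fin n → ℝ) (t : ℝ) :
    ∏ i, (t + z i) = ∑ j ∈ Finset.range (n + 1), elemSymm z j * t ^ (n - j) := by
  have h1 : ∀ i : Fin n, t + z i = z i + t := fun i => add_comm _ _
  simp_rw [h1]
  rw [Finset.prod_add]
  have hcard : (Finset.univ : Finset (Fin n)).card = n := by simp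
  rw [Finset.sum_powerset, hcard]
  refine Finset.sum_congr rfl fun j hj => ?_
  rw [elemSymm, Finset.sum_mul]
  refine Finset.sum_congr rfl fun J hJ => ?_
  rw [Finset.mem_powersetCard] at hJ
  rw [Finset.prod_const]
  congr 1
  rw [Finset.card_sdiff_of_subset hJ.1, hcard, hJ.2]

lemma elemSymm_zero {n : ℕ} (z : Fin n → ℝ) : elemSymm z 0 = 1 := by
  simp [elemSymm]

lemma elemSymm_nonneg {n : ℕ} (z : Fin n → ℝ) (hz : ∀ i, 0 ≤ z i) (j : ℕ) :
    0 ≤ elemSymm z j :=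
  Finset.sum_nonneg fun J _ => Finset.prod_nonneg fun i _ => hz i

lemma elemSymm_le {n : ℕ} (z : Fin n → ℝ) (B : ℝ) (hB : 0 ≤ B)
    (hz : ∀ i, 0 ≤ z i ∧ z i ≤ B) (j : ℕ) :
    elemSymm z j ≤ (n.choose j : ℝ) * B ^ j := by
  have key : elemSymm z j ≤ ∑ _J ∈ (Finset.univ : Finset (Fin n)).powersetCard j, B ^ j := by
    refine Finset.sum_le_sum fun J hJ => ?_
    rw [Finset.mem_powersetCard] at hJ
    calc ∏ i ∈ J, z i ≤ ∏ i ∈ J, B :=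
          Finset.prod_le_prod (fun i _ => (hz i).1) (fun i _ => (hz i).2)
      _ = B ^ j := by rw [Finset.prod_const, hJ.2]
  calc elemSymm z j ≤ _ := key
    _ = (n.choose j : ℝ) * B ^ j := by
        rw [Finset.sum_const, nsmul_eq_mul, Finset.card_powersetCard]
        simp

lemma key_ineq (n : ℕ) (hn : 3 ≤ n) (B : ℝ) (hB : 1 ≤ B)
    (ψ ψ' : Fin n → ℝ)
    (hψ : ∀ i, 0 ≤ ψ i ∧ ψ i ≤ B) (hψ' : ∀ i, 0 ≤ ψ' i ∧ ψ' i ≤ B)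
    (hS1 : elemSymm ψ 1 = elemSymm ψ' 1)
    (hS2 : elemSymm ψ 2 = elemSymm ψ' 2)
    (hS3 : elemSymm ψ' 3 + 1 ≤ elemSymm ψ 3)
    (t : ℝ) (ht : B ^ n * (n.choose (n / 2) : ℝ) + 1 ≤ t) :
    ∏ i, (t + ψ' i) < ∏ i, (t + ψ i) := by
  set M : ℝ := B ^ n * (n.choose (n / 2) : ℝ) with hM_def
  have hB0 : (0 : ℝ) ≤ B := by linarith
  have hchoose1 : 1 ≤ n.choose (n / 2) := Nat.choose_pos (Nat.div_le_self n 2)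
  have hM1 : (1 : ℝ) ≤ M := by
    have h1 : (1 : ℝ) ≤ B ^ n := one_le_pow₀ hB
    have h2 : (1 : ℝ) ≤ (n.choose (n / 2) : ℝ) := by exact_mod_cast hchoose1
    calc (1 : ℝ) = 1 * 1 := by ring
      _ ≤ _ := mul_le_mul h1 h2 zero_le_one (by linarith)
  have ht1 : (1 : ℝ) < t := by linarith
  have ht0 : (0 : ℝ) < t := by linarith
  have hbound : ∀ (z : Fin n → ℝ), (∀ i, 0 ≤ z i ∧ z i ≤ B) → ∀ j ≤ n,
      elemSymm z j ≤ M := by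
    intro z hz j hj
    calc elemSymm z j ≤ (n.choose j : ℝ) * B ^ j := elemSymm_le z _ hB0 hz j
      _ ≤ (n.choose (n / 2) : ℝ) * B ^ n := by
          refine mul_le_mul ?_ (pow_le_pow_right₀ hB hj) (by positivity) (by positivity)
          exact_mod_cast Nat.choose_le_middle j n
      _ = M := by rw [hM_def]; ring
  set D : ℕ → ℝ := fun j => elemSymm ψ j - elemSymm ψ' j with hD_def
  have hD0 : D 0 = 0 := by simp [hD_def, elemSymm_zero]
  have hD1 : D 1 = 0 := by simp [hD_def, hS1]
  have hD2 : D 2 = 0 := by simp [hD_def, hS2]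
  have hD3 : 1 ≤ D 3 := by simp only [hD_def]; linarith
  have hDlow : ∀ j ≤ n, -M ≤ D j := by
    intro j hj
    have h1 : 0 ≤ elemSymm ψ j := elemSymm_nonneg ψ (fun i => (hψ i).1) j
    have h2 : elemSymm ψ' j ≤ M := hbound ψ' hψ' j hj
    simp only [hD_def]; linarith
  have hdiff : ∏ i, (t + ψ i) - ∏ i, (t + ψ' i)
      = ∑ j ∈ Finset.range (n + 1), D j * t ^ (n - j) := by
    rw [prod_eq_sum_elemSymm, prod_eq_sum_elemSymm, ← Finset.sum_sub_distrib]
    refine Finset.sum_congr rfl fun j _ => ?_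
    simp only [hD_def]; ring
  have hsplit : ∑ j ∈ Finset.range (n + 1), D j * t ^ (n - j)
      = (∑ j ∈ Finset.Ico 0 4, D j * t ^ (n - j))
        + ∑ j ∈ Finset.Ico 4 (n + 1), D j * t ^ (n - j) := by
    rw [Finset.sum_Ico_consecutive _ (Nat.zero_le 4) (by omega), Finset.range_eq_Ico]
  have hfirst : ∑ j ∈ Finset.Ico 0 4, D j * t ^ (n - j) = D 3 * t ^ (n - 3) := by
    rw [← Finset.range_eq_Ico]
    rw [Finset.sum_range_succ, Finset.sum_range_succ, Finset.sum_range_succ,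
      Finset.sum_range_one, hD0, hD1, hD2]
    ring
  have hgeom : ∑ j ∈ Finset.Ico 4 (n + 1), t ^ (n - j)
      = ∑ k ∈ Finset.range (n - 3), t ^ k := by
    rw [Finset.range_eq_Ico]
    refine Finset.sum_nbij' (fun j => n - j) (fun k => n - k) ?_ ?_ ?_ ?_ ?_
    · intro a ha; simp only [Finset.mem_Ico] at *; omega
    · intro a ha; simp only [Finset.mem_Ico] at *; omega
    · intro a ha; simp only [Finset.mem_Ico] at ha; show n - (n - a) = a; omega
    · intro a ha; simp only [Finset.mem_Ico] at ha; show n - (n - a) = a; omega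
    · intro a _; rfl
  have hsecond : -(t ^ (n - 3) - 1) ≤ ∑ j ∈ Finset.Ico 4 (n + 1), D j * t ^ (n - j) := by
    have step1 : ∑ j ∈ Finset.Ico 4 (n + 1), (-M) * t ^ (n - j)
        ≤ ∑ j ∈ Finset.Ico 4 (n + 1), D j * t ^ (n - j) := by
      refine Finset.sum_le_sum fun j hj => ?_
      simp only [Finset.mem_Ico] at hj
      exact mul_le_mul_of_nonneg_right (hDlow j (by omega)) (by positivity)
    refine le_trans ?_ step1
    rw [← Finset.mul_sum, hgeom, geom_sum_eq ht1.ne' (n - 3), neg_mul, neg_le_neg_iff]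
    have hpos : 0 ≤ (t ^ (n - 3) - 1) / (t - 1) := by
      apply div_nonneg
      · have : (1 : ℝ) ≤ t ^ (n - 3) := one_le_pow₀ ht1.le
        linarith
      · linarith
    calc M * ((t ^ (n - 3) - 1) / (t - 1)) ≤ (t - 1) * ((t ^ (n - 3) - 1) / (t - 1)) :=
          mul_le_mul_of_nonneg_right (by linarith) hpos
      _ = t ^ (n - 3) - 1 := by
          rw [mul_comm, div_mul_cancel₀ _ (by linarith : t - 1 ≠ 0)]
  have hpow : (0 : ℝ) < t ^ (n - 3) := by positivity
  have : 0 < ∏ i, (t + ψ i) - ∏ i, (t + ψ' i) := by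
    rw [hdiff, hsplit, hfirst]
    nlinarith
  linarith

theorem stmt_11 (v δ : ℕ) (hv : 4 ≤ v) (hδ : 1 ≤ δ)
    (ψ ψ' : Fin (v - 1) → ℝ)
    (hψ : ∀ i, 0 ≤ ψ i ∧ ψ i ≤ 2 * δ) (hψ' : ∀ i, 0 ≤ ψ' i ∧ ψ' i ≤ 2 * δ)
    (hS1 : elemSymm ψ 1 = elemSymm ψ' 1)
    (hS2 : elemSymm ψ 2 = elemSymm ψ' 2)
    (hS3 : elemSymm ψ' 3 + 1 ≤ elemSymm ψ 3) :
    ∀ x : ℝ, (1 / (v : ℝ)) *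
        ((2 * (δ : ℝ)) ^ (v - 1) * Nat.choose (v - 1) ((v - 1) / 2) + 1) ≤ x →
      ∏ i, ((v : ℝ) * x + ψ' i) < ∏ i, ((v : ℝ) * x + ψ i) := by
  intro x hx
  have hδ1 : (1 : ℝ) ≤ (δ : ℝ) := by exact_mod_cast hδ
  have hv0 : (0 : ℝ) < (v : ℝ) := by positivity
  have ht : (2 * (δ : ℝ)) ^ (v - 1) * ((v - 1).choose ((v - 1) / 2) : ℝ) + 1
      ≤ (v : ℝ) * x := by
    have h := mul_le_mul_of_nonneg_left hx hv0.le
    rw [← mul_assoc, mul_one_div_cancel hv0.ne', one_mul] at h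
    exact h
  exact key_ineq (v - 1) (by omega) (2 * (δ : ℝ)) (by linarith) ψ ψ'
    hψ hψ' hS1 hS2 hS3 ((v : ℝ) * x) ht
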